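/- arXiv:2004.00509 — 2 statements merged into one kernel-verified Lean document; each statement's English description precedes it below -/
import Mathlib

section
/- Let q be a prime power and s, n, k, v positive integers with v < s and k < n. Let V and W be F_q-linear subspaces of F_{q^s} with dim_{F_q} V = v, dim_{F_q} W = s - v and V ⊕ W = F_{q^s}. Let C ⊆ F_{q^s}^n be an F_{q^s}-linear code of dimension k and let I ⊆ {1,…,n} be an information set for C, with complement Ī. Then, viewing all spaces as F_q-vector spaces, the subspaces C, φ_Ī(V^{n-k}) and φ_Ī(W^{n-k}) of F_{q^s}^n are in direct sum and C ⊕ φ_Ī(V^{n-k}) ⊕ φ_Ī(W^{n-k}) = F_{q^s}^n. -/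
/-- For a linear code `C ⊆ F_{q^s}^n` of dimension `k` with information set
`I`, and a decomposition `F_{q^s} = V ⊕ W` over `F_q` with `dim V = v`, `dim W = s - v`,
the `F_q`-subspaces `C`, `φ_Ī(V^{n-k})` and `φ_Ī(W^{n-k})` of `F_{q^s}^n` are in direct
sum and their sum is all of `F_{q^s}^n`. -/
theorem stmt_0
    (q s n k v : ℕ) (hs : 0 < s) (hn : 0 < n) (hk : 0 < k) (hv : 0 < v)
    (hvs : v < s) (hkn : k < n)
    (F E : Type*) [Field F] [Fintype F] [Field E] [Algebra F E]
    (hq : Fintype.card F = q) (hE : Module.finrank F E = s)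
    (V W : Submodule F E)
    (hV : Module.finrank F V = v) (hW : Module.finrank F W = s - v)
    (hVW : IsCompl V W)
    (C : Submodule E (Fin n → E)) (hC : Module.finrank E C = k)
    (I : Finset (Fin n)) (hI : I.card = k)
    (hinfo : ∀ y : Fin n → E, ∃ c ∈ C, ∀ j ∈ I, c j = y j) :
    iSupIndep
      (![C.restrictScalars F,
         Submodule.pi Set.univ (fun j => if j ∈ I then (⊥ : Submodule F E) else V),
         Submodule.pi Set.univ (fun j => if j ∈ I then (⊥ : Submodule F E) else W)]) ∧
    (C.restrictScalars F ⊔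
       Submodule.pi Set.univ (fun j => if j ∈ I then (⊥ : Submodule F E) else V) ⊔
       Submodule.pi Set.univ (fun j => if j ∈ I then (⊥ : Submodule F E) else W)) = ⊤ := by
  classical
  set A := C.restrictScalars F with hAdef
  set P := Submodule.pi Set.univ (fun j => if j ∈ I then (⊥ : Submodule F E) else V) with hPdef
  set Q := Submodule.pi Set.univ (fun j => if j ∈ I then (⊥ : Submodule F E) else W) with hQdef
  -- a codeword vanishing on I is zero
  have hzero : ∀ c ∈ C, (∀ j ∈ I, c j = 0) → c = 0 := by
    intro c hc hcI
    have hfd : FiniteDimensional E C := Module.finite_of_finrank_pos (by rw [hC]; exact hk)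
    let π : C →ₗ[E] ({j // j ∈ I} → E) :=
      { toFun := fun c j => (c : Fin n → E) j
        map_add' := fun a b => rfl
        map_smul' := fun a b => rfl }
    have hsurj : Function.Surjective π := by
      intro y
      obtain ⟨c', hc', hc'y⟩ := hinfo (fun j => if h : j ∈ I then y ⟨j, h⟩ else 0)
      refine ⟨⟨c', hc'⟩, funext fun j => ?_⟩
      have := hc'y j j.2
      simp only [j.2, dif_pos] at this
      simpa [π] using this
    have hdim : Module.finrank E C = Module.finrank E ({j // j ∈ I} → E) := by
      rw [hC, Module.finrank_pi]
      simp [hI]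
    have hinj : Function.Injective π :=
      (LinearMap.injective_iff_surjective_of_finrank_eq_finrank hdim).mpr hsurj
    have : π ⟨c, hc⟩ = π 0 := by
      ext j
      simpa [π] using hcI j j.2
    exact congrArg Subtype.val (hinj this)
  -- membership descriptions
  have hmemP : ∀ x : Fin n → E, x ∈ P ↔ (∀ j ∈ I, x j = 0) ∧ (∀ j ∉ I, x j ∈ V) := by
    intro x
    rw [hPdef, Submodule.mem_pi]
    constructor
    · intro h
      exact ⟨fun j hj => by simpa [hj] using h j (Set.mem_univ j),
             fun j hj => by simpa [hj] using h j (Set.mem_univ j)⟩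
    · intro ⟨h1, h2⟩ j _
      by_cases hj : j ∈ I <;> simp [hj, h1, h2, h1 j, h2 j]
  have hmemQ : ∀ x : Fin n → E, x ∈ Q ↔ (∀ j ∈ I, x j = 0) ∧ (∀ j ∉ I, x j ∈ W) := by
    intro x
    rw [hQdef, Submodule.mem_pi]
    constructor
    · intro h
      exact ⟨fun j hj => by simpa [hj] using h j (Set.mem_univ j),
             fun j hj => by simpa [hj] using h j (Set.mem_univ j)⟩
    · intro ⟨h1, h2⟩ j _
      by_cases hj : j ∈ I <;> simp [hj, h1, h2, h1 j, h2 j]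
  -- elements of P ⊔ Q vanish on I
  have hvanish : ∀ x ∈ P ⊔ Q, ∀ j ∈ I, x j = 0 := by
    intro x hx j hj
    rw [Submodule.mem_sup] at hx
    obtain ⟨p, hp, w, hw, rfl⟩ := hx
    rw [hmemP] at hp; rw [hmemQ] at hw
    simp [hp.1 j hj, hw.1 j hj]
  -- decomposition of vectors vanishing on I
  have hdecomp : ∀ x : Fin n → E, (∀ j ∈ I, x j = 0) → x ∈ P ⊔ Q := by
    intro x hx
    set a : Fin n → E := fun j => if j ∈ I then 0 else (V.linearProjOfIsCompl W hVW (x j) : E)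
      with ha
    have haP : a ∈ P := by
      rw [hmemP]
      exact ⟨fun j hj => by simp [ha, hj], fun j hj => by simp [ha, hj]⟩
    have hbQ : x - a ∈ Q := by
      rw [hmemQ]
      constructor
      · intro j hj; simp [ha, hj, hx j hj]
      · intro j hj
        have key := Submodule.projection_add_projection_eq_self hVW (x j)
        have h2 : (x - a) j = (W.linearProjOfIsCompl V hVW.symm (x j) : E) := by
          simp only [Pi.sub_apply, ha, if_neg hj]
          exact (eq_sub_of_add_eq' key).symm
        rw [h2]
        exact (W.linearProjOfIsCompl V hVW.symm (x j)).2
    have hmem : a + (x - a) ∈ P ⊔ Q :=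
      Submodule.add_mem_sup haP hbQ
    have e : a + (x - a) = x := by abel
    rwa [e] at hmem
  constructor
  · rw [iSupIndep_def]
    intro i
    have hPQbot : ∀ x : Fin n → E, x ∈ P → x ∈ Q → x = 0 := by
      intro x hp hw
      rw [hmemP] at hp; rw [hmemQ] at hw
      funext j
      by_cases hj : j ∈ I
      · exact hp.1 j hj
      · have : x j ∈ V ⊓ W := ⟨hp.2 j hj, hw.2 j hj⟩
        rw [hVW.inf_eq_bot] at this
        simpa using this
    fin_cases i
    · have hle : (⨆ j, ⨆ (_ : j ≠ (0 : Fin 3)),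
          ![A, P, Q] j) ≤ P ⊔ Q := by
        refine iSup_le fun j => iSup_le fun hj => ?_
        fin_cases j
        · exact absurd rfl hj
        · exact le_sup_left
        · exact le_sup_right
      refine Disjoint.mono_right hle ?_
      rw [Submodule.disjoint_def]
      intro x hxA hxPQ
      exact hzero x hxA (hvanish x hxPQ)
    · have hle : (⨆ j, ⨆ (_ : j ≠ (1 : Fin 3)),
          ![A, P, Q] j) ≤ A ⊔ Q := by
        refine iSup_le fun j => iSup_le fun hj => ?_
        fin_cases j
        · exact le_sup_left
        · exact absurd rfl hj
        · exact le_sup_right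
      refine Disjoint.mono_right hle ?_
      rw [Submodule.disjoint_def]
      intro x hxP hx
      rw [Submodule.mem_sup] at hx
      obtain ⟨c, hc, w, hw, rfl⟩ := hx
      have hc0 : c = 0 := by
        refine hzero c hc fun j hj => ?_
        have h1 : (c + w) j = 0 := ((hmemP _).mp hxP).1 j hj
        have h2 : w j = 0 := ((hmemQ _).mp hw).1 j hj
        have : c j + w j = 0 := h1
        simpa [h2] using this
      subst hc0
      simp only [zero_add] at hxP ⊢
      exact hPQbot w hxP hw
    · have hle : (⨆ j, ⨆ (_ : j ≠ (2 : Fin 3)),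
          ![A, P, Q] j) ≤ A ⊔ P := by
        refine iSup_le fun j => iSup_le fun hj => ?_
        fin_cases j
        · exact le_sup_left
        · exact le_sup_right
        · exact absurd rfl hj
      refine Disjoint.mono_right hle ?_
      rw [Submodule.disjoint_def]
      intro x hxQ hx
      rw [Submodule.mem_sup] at hx
      obtain ⟨c, hc, p, hp, rfl⟩ := hx
      have hc0 : c = 0 := by
        refine hzero c hc fun j hj => ?_
        have h1 : (c + p) j = 0 := ((hmemQ _).mp hxQ).1 j hj
        have h2 : p j = 0 := ((hmemP _).mp hp).1 j hj
        have : c j + p j = 0 := h1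
        simpa [h2] using this
      subst hc0
      simp only [zero_add] at hxQ ⊢
      exact hPQbot p hp hxQ
  · rw [eq_top_iff]
    intro y _
    obtain ⟨c, hc, hcy⟩ := hinfo y
    have h1 : y - c ∈ P ⊔ Q := hdecomp _ (fun j hj => by simp [hcy j hj])
    have h2 : c + (y - c) ∈ A ⊔ (P ⊔ Q) := Submodule.add_mem_sup hc h1
    rw [sup_assoc]
    simpa using h2
end

section
/- Let q be a prime power and s, n, k, v positive integers with v < s and k < n. Let V be an F_q-linear subspace of F_{q^s} with dim_{F_q} V = v, let C ⊆ F_{q^s}^n be an F_{q^s}-linear code of dimension k, and let I ⊆ {1,…,n} be an information set for C with complement Ī. Set k_0 = ks + v(n-k). Then the F_q-vector subspace C + φ_Ī(V^{n-k}) of F_{q^s}^n has F_q-dimension exactly k_0, and consequently every matrix M ∈ F_{q^s}^{r×n} all of whose rows lie in C + φ_Ī(V^{n-k}) satisfies rk_{F_q}(M) ≤ k_0. -/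
/-- The submodule `Submodule.pi Set.univ p` is linearly equivalent to the pi type of the
submodules. -/
noncomputable def piSubEquiv {R ι : Type*} [Semiring R] [Fintype ι] {φ : ι → Type*}
    [∀ i, AddCommMonoid (φ i)] [∀ i, Module R (φ i)] (p : ∀ i, Submodule R (φ i)) :
    ↥(Submodule.pi Set.univ p) ≃ₗ[R] ∀ i, ↥(p i) where
  toFun x := fun i => ⟨x.1 i, x.2 i (Set.mem_univ i)⟩
  map_add' x y := rfl
  map_smul' c x := rfl
  invFun y := ⟨fun i => (y i).1, fun i _ => (y i).2⟩
  left_inv x := rfl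
  right_inv y := rfl

/-- With `C` a code of dimension `k` with information set `I` and `V` an
`F_q`-subspace of `F_{q^s}` of dimension `v`, the `F_q`-subspace `C + φ_Ī(V^{n-k})` of
`F_{q^s}^n` has `F_q`-dimension exactly `k₀ = ks + v(n-k)`, and any matrix whose rows lie
in it has `F_q`-rank at most `k₀`. -/
theorem stmt_1
    (q s n k v : ℕ) (hs : 0 < s) (hn : 0 < n) (hk : 0 < k) (hv : 0 < v)
    (hvs : v < s) (hkn : k < n)
    (F E : Type*) [Field F] [Fintype F] [Field E] [Algebra F E]
    (hq : Fintype.card F = q) (hE : Module.finrank F E = s)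
    (V : Submodule F E) (hV : Module.finrank F V = v)
    (C : Submodule E (Fin n → E)) (hC : Module.finrank E C = k)
    (I : Finset (Fin n)) (hI : I.card = k)
    (hinfo : ∀ y : Fin n → E, ∃ c ∈ C, ∀ j ∈ I, c j = y j) :
    Module.finrank F ↥
        (C.restrictScalars F ⊔
          Submodule.pi Set.univ (fun j => if j ∈ I then (⊥ : Submodule F E) else V))
      = k * s + v * (n - k) ∧
    ∀ (r : ℕ) (M : Fin r → Fin n → E),
      (∀ t : Fin r,
        M t ∈ C.restrictScalars F ⊔
          Submodule.pi Set.univ (fun j => if j ∈ I then (⊥ : Submodule F E) else V)) →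
      Module.finrank F (Submodule.span F (Set.range M)) ≤ k * s + v * (n - k) := by
  have hEfin : FiniteDimensional F E := FiniteDimensional.of_finrank_pos (hE ▸ hs)
  have hEn : FiniteDimensional F (Fin n → E) := inferInstance
  set P : Submodule F (Fin n → E) :=
    Submodule.pi Set.univ (fun j => if j ∈ I then (⊥ : Submodule F E) else V) with hP
  -- projection onto I is injective on C
  have hCfin : FiniteDimensional E C := FiniteDimensional.of_finrank_pos (hC ▸ hk)
  have hproj : ∀ c ∈ C, (∀ j ∈ I, c j = 0) → c = 0 := by
    intro c hc hcz
    let π : C →ₗ[E] (I → E) :=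
      { toFun := fun x j => x.1 j.1
        map_add' := fun x y => rfl
        map_smul' := fun a x => rfl }
    have hsurj : Function.Surjective π := by
      intro y
      obtain ⟨c', hc', hcy⟩ := hinfo (fun j => if h : j ∈ I then y ⟨j, h⟩ else 0)
      refine ⟨⟨c', hc'⟩, funext fun j => ?_⟩
      simpa [π, j.2] using hcy j.1 j.2
    have hdim : Module.finrank E C = Module.finrank E (I → E) := by
      simp [hC, Module.finrank_pi, hI]
    have hinj : Function.Injective π :=
      (LinearMap.injective_iff_surjective_of_finrank_eq_finrank hdim).2 hsurj
    have : π ⟨c, hc⟩ = π 0 := by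
      ext j; simpa [π] using hcz j.1 j.2
    simpa using congrArg Subtype.val (hinj this)
  have hdisj : C.restrictScalars F ⊓ P = ⊥ := by
    rw [eq_bot_iff]
    intro x ⟨hxC, hxP⟩
    have : ∀ j ∈ I, x j = 0 := by
      intro j hj
      have := hxP j (Set.mem_univ j)
      simpa [hj] using this
    simpa using hproj x hxC this
  have hrankC : Module.finrank F ↥(C.restrictScalars F) = k * s := by
    have := Module.finrank_mul_finrank F E C
    have h2 : Module.finrank F ↥(C.restrictScalars F) = Module.finrank F ↥C := rfl
    rw [h2, ← this, hE, hC, mul_comm]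
  have hrankP : Module.finrank F ↥P = v * (n - k) := by
    rw [hP]
    rw [LinearEquiv.finrank_eq (piSubEquiv _), Module.finrank_pi_fintype]
    have : ∀ j : Fin n,
        Module.finrank F ↥(if j ∈ I then (⊥ : Submodule F E) else V)
        = if j ∈ I then 0 else v := by
      intro j; by_cases h : j ∈ I
      · rw [if_pos h, if_pos h]; exact finrank_bot F E
      · rw [if_neg h, if_neg h]; exact hV
    rw [Finset.sum_congr rfl (fun j _ => this j)]
    have hcard : (Finset.univ.filter (fun j => ¬ j ∈ I)).card = n - k := by
      have := Finset.card_filter_add_card_filter_not (s := Finset.univ)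
        (p := (· ∈ I))
      have h1 : (Finset.univ.filter (· ∈ I)).card = k := by
        rw [Finset.filter_univ_mem, hI]
      simp only [Finset.card_univ, Fintype.card_fin] at this
      omega
    rw [Finset.sum_ite, Finset.sum_const, Finset.sum_const, smul_eq_mul, smul_eq_mul,
      mul_zero, zero_add, hcard, mul_comm]
  have hmain : Module.finrank F ↥(C.restrictScalars F ⊔ P) = k * s + v * (n - k) := by
    have := Submodule.finrank_sup_add_finrank_inf_eq (C.restrictScalars F) P
    rw [hdisj] at this
    simp only [finrank_bot, add_zero] at this
    rw [this, hrankC, hrankP]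
  refine ⟨hmain, fun r M hM => ?_⟩
  have hle : Submodule.span F (Set.range M) ≤ C.restrictScalars F ⊔ P := by
    rw [Submodule.span_le]
    rintro _ ⟨t, rfl⟩
    exact hM t
  calc Module.finrank F ↥(Submodule.span F (Set.range M))
      ≤ Module.finrank F ↥(C.restrictScalars F ⊔ P) := Submodule.finrank_mono hle
    _ = k * s + v * (n - k) := hmain
end
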